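/- arXiv:2407.05495 — 3 statements merged into one kernel-verified Lean document; each statement's English description precedes it below -/
import Mathlib

section
/- Suppose every window g_l has support of diameter less than M (i.e. max supp(g_l) − min supp(g_l) < M). Then the multiwindow Gabor system G(g,L,M,N) = {E_{m/M}T_{nN}g_l} is a frame for ℓ²(S) with bounds A, B if and only if A ≤ M ∑_{l=0}^{L-1} ∑_{n∈ℤ} |g_l(j−nN)|² ≤ B for every j ∈ S ∩ {0,...,N−1}. In this case the frame operator is the multiplication operator S f(j) = (M ∑_l ∑_{n∈ℤ} |g_l(j−nN)|²) f(j). -/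
open Complex MeasureTheory

noncomputable section

/-- The ℓ² "inner product" ⟨f,g⟩ = ∑_{j∈ℤ} f(j)·conj(g(j)). -/
def dotP (f g : ℤ → ℂ) : ℂ := ∑' j : ℤ, f j * (starRingEnd ℂ) (g j)

/-- Squared ℓ² norm. -/
def normSq2 (f : ℤ → ℂ) : ℝ := ∑' j : ℤ, ‖f j‖ ^ 2

/-- Membership in ℓ²(S): square-summable and vanishing off S. -/
def MemL2S (S : Set ℤ) (f : ℤ → ℂ) : Prop := Memℓp f 2 ∧ ∀ j ∉ S, f j = 0

/-- S ⊆ ℤ is an Nℤ-periodic (nonempty) set. -/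
def IsPeriodicSet (N : ℕ) (S : Set ℤ) : Prop :=
  S.Nonempty ∧ ∀ j ∈ S, ∀ n : ℤ, j + n * (N : ℤ) ∈ S

/-- The multiwindow Gabor family {E_{m/M}T_{nN} g_l}. -/
def gaborFam (L M N : ℕ) (g : ℕ → ℤ → ℂ) : Fin L × ℤ × Fin M → ℤ → ℂ :=
  fun p j =>
    Complex.exp (2 * (Real.pi : ℂ) * Complex.I * ((p.2.2 : ℕ) : ℂ) * (j : ℂ) / (M : ℂ)) *
      g p.1 (j - p.2.1 * (N : ℤ))

/-- Frame for ℓ²(S) with bounds A, B. -/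
def IsFrameOn {ι : Type*} (S : Set ℤ) (F : ι → ℤ → ℂ) (A B : ℝ) : Prop :=
  ∀ f : ℤ → ℂ, MemL2S S f →
    A * normSq2 f ≤ ∑' i, ‖dotP f (F i)‖ ^ 2 ∧
      ∑' i, ‖dotP f (F i)‖ ^ 2 ≤ B * normSq2 f

/-- Bessel sequence in ℓ²(S). -/
def IsBesselOn {ι : Type*} (S : Set ℤ) (F : ι → ℤ → ℂ) : Prop :=
  ∃ B : ℝ, 0 < B ∧ ∀ f : ℤ → ℂ, MemL2S S f →
    ∑' i, ‖dotP f (F i)‖ ^ 2 ≤ B * normSq2 f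

/-- Exact frame (Riesz basis): a frame that ceases to be a frame upon
removing any single element. -/
def IsExactFrameOn {ι : Type*} (S : Set ℤ) (F : ι → ℤ → ℂ) : Prop :=
  (∃ A B : ℝ, 0 < A ∧ A ≤ B ∧ IsFrameOn S F A B) ∧
  ∀ i₀ : ι, ¬ ∃ A B : ℝ, 0 < A ∧ A ≤ B ∧
      IsFrameOn S (fun i : {i // i ≠ i₀} => F (i : ι)) A B

/-- Orthonormal basis: orthonormal family that is a Parseval frame. -/
def IsONBOn {ι : Type*} [DecidableEq ι] (S : Set ℤ) (F : ι → ℤ → ℂ) : Prop :=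
  (∀ i i' : ι, dotP (F i) (F i') = if i = i' then 1 else 0) ∧ IsFrameOn S F 1 1

/-- The matrix entry (M_φ(j)M_ψ*(j))_{0,k} = ∑_n φ(j−nN)·conj(ψ(j+kM−nN)). -/
def matEntry (M N : ℕ) (φ ψ : ℤ → ℂ) (j k : ℤ) : ℂ :=
  ∑' n : ℤ, φ (j - n * (N : ℤ)) * (starRingEnd ℂ) (ψ (j + k * (M : ℤ) - n * (N : ℤ)))

/-- The discrete Zak transform z_M g (j, θ) = ∑_k g(j+kM) e^{2πikθ}. -/
def zak (M : ℕ) (g : ℤ → ℂ) (j : ℤ) (θ : ℝ) : ℂ :=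
  ∑' k : ℤ, g (j + k * (M : ℤ)) *
    Complex.exp (2 * (Real.pi : ℂ) * Complex.I * (k : ℂ) * (θ : ℂ))

end

/-!
For a window `φ` supported in an interval of length `M`, the function `f · conj (T_{nN} φ)` is
supported in an interval of length `M`, on which the modulations `E_{m/M}`, `m < M`, are orthogonal
with squared norm `M`. Parseval and Fourier inversion on that interval give
`∑_m |⟨f, E_{m/M} T_{nN} φ⟩|² = M ∑_j |f j|² |φ (j - nN)|²` and
`∑_m ⟨f, E_{m/M} T_{nN} φ⟩ E_{m/M} T_{nN} φ = M |T_{nN} φ|² f`. Summing over the windows and shifts,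
the frame operator is multiplication by the `N`-periodic weight `w j = M ∑_l ∑_n |g_l (j - nN)|²`,
so the frame inequalities amount to `A ≤ w ≤ B` on `S` (necessity by testing on unit vectors),
and by periodicity of `w` and `S` it is enough to check them on `S ∩ [0, N)`.
-/

open ComplexConjugate Function

noncomputable def modulation (M m : ℕ) (j : ℤ) : ℂ :=
  exp (2 * Real.pi * I * m * j / M)

section DFT

lemma modulation_eq_pow (M m : ℕ) (j : ℤ) :
    modulation M m j = (exp (2 * Real.pi * I / M) ^ j) ^ m := by
  rw [modulation, ← exp_int_mul, ← exp_nat_mul]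
  ring_nf

lemma sum_modulation (M : ℕ) (d : ℤ) :
    ∑ m : Fin M, modulation M m d = if (M : ℤ) ∣ d then (M : ℂ) else 0 := by
  obtain rfl | hM := eq_or_ne M 0
  · simp
  have hζ := isPrimitiveRoot_exp M hM
  simp_rw [modulation_eq_pow]
  rw [Fin.sum_univ_eq_sum_range (fun m => (_ ^ d) ^ m)]
  set ζ := exp (2 * Real.pi * I / M)
  split_ifs with hd
  · simp [(hζ.zpow_eq_one_iff_dvd d).2 hd]
  · have hζd : (ζ ^ d) ^ M = 1 := by
      rw [← zpow_natCast, ← zpow_mul, mul_comm, zpow_mul, zpow_natCast, hζ.pow_eq_one, one_zpow]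
    rw [geom_sum_eq (mt (hζ.zpow_eq_one_iff_dvd d).1 hd), hζd, sub_self, zero_div]

lemma conj_modulation_mul_modulation (M m : ℕ) (j j' : ℤ) :
    conj (modulation M m j') * modulation M m j = modulation M m (j - j') := by
  rw [modulation, modulation, modulation, ← exp_conj, ← exp_add]
  congr 1
  simp only [map_div₀, map_mul, map_ofNat, conj_ofReal, conj_I, map_natCast, map_intCast]
  push_cast
  ring

variable {M : ℕ} {t : ℤ} {h : ℤ → ℂ}

lemma dotP_modulation_eq_sum (hh : support h ⊆ Set.Ico t (t + M)) (m : ℕ) :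
    dotP h (modulation M m) = ∑ j ∈ Finset.Ico t (t + M), h j * conj (modulation M m j) :=
  tsum_eq_sum' <| by
    rw [Finset.coe_Ico]
    exact (support_mul_subset_left _ _).trans hh

lemma sum_dotP_modulation_mul_modulation (hh : support h ⊆ Set.Ico t (t + M))
    {j : ℤ} (hj : j ∈ Set.Ico t (t + M)) :
    ∑ m : Fin M, dotP h (modulation M m) * modulation M m j = M * h j := by
  simp_rw [dotP_modulation_eq_sum hh, Finset.sum_mul, mul_assoc, conj_modulation_mul_modulation]
  rw [Finset.sum_comm]
  simp_rw [← Finset.mul_sum, sum_modulation]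
  rw [Finset.sum_eq_single_of_mem j (by simpa using hj)]
  · simp [mul_comm]
  · intro j' hj' hne
    rw [if_neg, mul_zero]
    intro hdvd
    simp only [Finset.mem_Ico] at hj'
    simp only [Set.mem_Ico] at hj
    have hlt : |j - j'| < M := abs_sub_lt_iff.2 ⟨by omega, by omega⟩
    exact hne (sub_eq_zero.1 (Int.eq_zero_of_abs_lt_dvd hdvd hlt)).symm

lemma sum_norm_dotP_modulation_sq (hh : support h ⊆ Set.Ico t (t + M)) :
    ∑ m : Fin M, ‖dotP h (modulation M m)‖ ^ 2 = M * ∑ j ∈ Finset.Ico t (t + M), ‖h j‖ ^ 2 := by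
  apply ofReal_injective
  push_cast
  have hconj : ∀ m : Fin M, conj (dotP h (modulation M m)) =
      ∑ j ∈ Finset.Ico t (t + M), conj (h j) * modulation M m j := by
    intro m
    simp [dotP_modulation_eq_sum hh, map_sum]
  calc ∑ m : Fin M, (‖dotP h (modulation M m)‖ : ℂ) ^ 2
      = ∑ m : Fin M, dotP h (modulation M m) * conj (dotP h (modulation M m)) := by
        simp_rw [mul_conj']
    _ = ∑ j ∈ Finset.Ico t (t + M),
          conj (h j) * ∑ m : Fin M, dotP h (modulation M m) * modulation M m j := by
        simp_rw [hconj, Finset.mul_sum]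
        rw [Finset.sum_comm]
        simp only [mul_left_comm]
    _ = M * ∑ j ∈ Finset.Ico t (t + M), (‖h j‖ : ℂ) ^ 2 := by
        rw [Finset.mul_sum]
        refine Finset.sum_congr rfl fun j hj => ?_
        rw [sum_dotP_modulation_mul_modulation hh (by simpa using hj), mul_left_comm, conj_mul']

end DFT

noncomputable def gaborAtom (M N : ℕ) (φ : ℤ → ℂ) (n : ℤ) (m : ℕ) (j : ℤ) : ℂ :=
  modulation M m j * φ (j - n * N)

section Window

variable {M N : ℕ} {φ : ℤ → ℂ} {t : ℤ}

lemma dotP_gaborAtom (f φ : ℤ → ℂ) (n : ℤ) (m : ℕ) :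
    dotP f (gaborAtom M N φ n m) = dotP (fun j => f j * conj (φ (j - n * N))) (modulation M m) :=
  tsum_congr fun j => by rw [gaborAtom, map_mul]; ring

lemma support_translate_subset (hφ : support φ ⊆ Set.Ico t (t + M)) (n : ℤ) :
    support (fun j => φ (j - n * N)) ⊆ Set.Ico (t + n * N) (t + n * N + M) := by
  intro j hj
  have := hφ hj
  simp only [Set.mem_Ico] at this ⊢
  omega

lemma support_mul_conj_translate_subset (hφ : support φ ⊆ Set.Ico t (t + M)) (f : ℤ → ℂ) (n : ℤ) :
    support (fun j => f j * conj (φ (j - n * N))) ⊆ Set.Ico (t + n * N) (t + n * N + M) :=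
  fun _ hj => support_translate_subset hφ n ((map_ne_zero _).1 (right_ne_zero_of_mul hj))

lemma sum_enorm_dotP_gaborAtom_sq (hφ : support φ ⊆ Set.Ico t (t + M)) (f : ℤ → ℂ) (n : ℤ) :
    ∑ m : Fin M, ‖dotP f (gaborAtom M N φ n m)‖ₑ ^ 2 =
      M * ∑' j, ‖f j‖ₑ ^ 2 * ‖φ (j - n * N)‖ₑ ^ 2 := by
  have hsupp := support_mul_conj_translate_subset (N := N) hφ f n
  have hreal := sum_norm_dotP_modulation_sq hsupp
  rw [tsum_eq_sum' (s := Finset.Ico (t + n * N) (t + n * N + M))]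
  · simp_rw [dotP_gaborAtom]
    simp only [← ofReal_norm, ← ENNReal.ofReal_pow (norm_nonneg _),
      ← ENNReal.ofReal_mul (sq_nonneg _), ← ENNReal.ofReal_sum_of_nonneg (fun _ _ => sq_nonneg _)]
    rw [hreal, ENNReal.ofReal_mul (Nat.cast_nonneg _), ENNReal.ofReal_natCast,
      ENNReal.ofReal_sum_of_nonneg (fun _ _ => sq_nonneg _)]
    simp_rw [norm_mul, Complex.norm_conj, mul_pow]
  · rw [Finset.coe_Ico]
    exact (support_mul_subset_right _ _).trans fun j hj =>
      support_translate_subset hφ n (by simpa using hj)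

lemma finite_support_translate (hN : N ≠ 0) (hφ : support φ ⊆ Set.Ico t (t + M)) (j : ℤ) :
    (support fun n : ℤ => φ (j - n * N)).Finite := by
  have hinj : Injective fun n : ℤ => j - n * N :=
    fun a b hab => mul_right_cancel₀ (by exact_mod_cast hN) (sub_right_injective hab)
  exact ((Set.finite_Ico t (t + M)).preimage hinj.injOn).subset fun n hn => hφ hn

lemma sum_dotP_gaborAtom_mul_gaborAtom (hφ : support φ ⊆ Set.Ico t (t + M)) (f : ℤ → ℂ) (n j : ℤ) :
    ∑ m : Fin M, dotP f (gaborAtom M N φ n m) * gaborAtom M N φ n m j =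
      M * ‖φ (j - n * N)‖ ^ 2 * f j := by
  by_cases hj : j ∈ Set.Ico (t + n * N) (t + n * N + M)
  · simp_rw [gaborAtom, ← mul_assoc, ← Finset.sum_mul, dotP_gaborAtom,
      sum_dotP_modulation_mul_modulation (support_mul_conj_translate_subset hφ f n) hj]
    rw [mul_assoc, mul_assoc, conj_mul']
    ring
  · simp [gaborAtom, notMem_support.1 (mt (support_translate_subset hφ n ·) hj)]

end Window

noncomputable def gaborWeight (L M N : ℕ) (g : ℕ → ℤ → ℂ) (j : ℤ) : ℝ :=
  M * ∑ l ∈ Finset.range L, ∑' n : ℤ, ‖g l (j - n * N)‖ ^ 2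

lemma tsum_eq_toReal_tsum_ofReal {ι : Type*} {u : ι → ℝ} (hu : ∀ i, 0 ≤ u i) :
    ∑' i, u i = (∑' i, ENNReal.ofReal (u i)).toReal := by
  rw [ENNReal.tsum_toReal_eq fun _ => ENNReal.ofReal_ne_top]
  exact tsum_congr fun i => (ENNReal.toReal_ofReal (hu i)).symm

section Gabor

variable {L M N : ℕ} {g : ℕ → ℤ → ℂ}

lemma gaborWeight_nonneg (j : ℤ) : 0 ≤ gaborWeight L M N g j := by
  unfold gaborWeight
  positivity

lemma gaborWeight_periodic : Periodic (gaborWeight L M N g) N := by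
  intro j
  unfold gaborWeight
  congr 1
  refine Finset.sum_congr rfl fun l _ => ?_
  rw [← (Equiv.addRight (1 : ℤ)).tsum_eq]
  congr! 3 with n
  simp only [Equiv.coe_addRight]
  ring_nf

lemma ofReal_gaborWeight (hN : N ≠ 0) (hsupp : ∀ l, ∃ t, support (g l) ⊆ Set.Ico t (t + M))
    (j : ℤ) :
    ENNReal.ofReal (gaborWeight L M N g j) =
      M * ∑' l : Fin L, ∑' n : ℤ, ‖g l (j - n * N)‖ₑ ^ 2 := by
  rw [gaborWeight, ENNReal.ofReal_mul (Nat.cast_nonneg _), ENNReal.ofReal_natCast, tsum_fintype,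
    ← Fin.sum_univ_eq_sum_range (fun l => ∑' n : ℤ, ‖g l (j - n * N)‖ ^ 2),
    ENNReal.ofReal_sum_of_nonneg fun _ _ => tsum_nonneg fun _ => sq_nonneg _]
  congr 1
  refine Finset.sum_congr rfl fun l _ => ?_
  obtain ⟨t, ht⟩ := hsupp l
  have hfin : (support fun n : ℤ => ‖g l (j - n * N)‖ ^ 2).Finite :=
    (finite_support_translate hN ht j).subset fun n hn => by simpa using hn
  rw [ENNReal.ofReal_tsum_of_nonneg (fun _ => sq_nonneg _) (summable_of_hasFiniteSupport hfin)]
  simp_rw [ENNReal.ofReal_pow (norm_nonneg _), ofReal_norm]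

lemma tsum_enorm_dotP_gaborFam_sq (hsupp : ∀ l, ∃ t, support (g l) ⊆ Set.Ico t (t + M))
    (f : ℤ → ℂ) :
    ∑' i, ‖dotP f (gaborFam L M N g i)‖ₑ ^ 2 =
      ∑' j, ‖f j‖ₑ ^ 2 * (M * ∑' l : Fin L, ∑' n : ℤ, ‖g l (j - n * N)‖ₑ ^ 2) := by
  calc ∑' i, ‖dotP f (gaborFam L M N g i)‖ₑ ^ 2
      = ∑' (l : Fin L) (n : ℤ), ∑ m : Fin M, ‖dotP f (gaborAtom M N (g l) n m)‖ₑ ^ 2 := by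
        simp_rw [ENNReal.tsum_prod', tsum_fintype]
        rfl
    _ = ∑' (l : Fin L) (n : ℤ), M * ∑' j, ‖f j‖ₑ ^ 2 * ‖g l (j - n * N)‖ₑ ^ 2 := by
        refine tsum_congr fun l => tsum_congr fun n => ?_
        obtain ⟨t, ht⟩ := hsupp l
        exact sum_enorm_dotP_gaborAtom_sq ht f n
    _ = ∑' (l : Fin L) (n : ℤ) (j : ℤ), ‖f j‖ₑ ^ 2 * (M * ‖g l (j - n * N)‖ₑ ^ 2) := by
        simp_rw [← ENNReal.tsum_mul_left, mul_left_comm]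
    _ = ∑' (j : ℤ) (l : Fin L) (n : ℤ), ‖f j‖ₑ ^ 2 * (M * ‖g l (j - n * N)‖ₑ ^ 2) :=
        (tsum_congr fun l => ENNReal.tsum_comm).trans ENNReal.tsum_comm
    _ = _ := by
        simp_rw [ENNReal.tsum_mul_left]

/- Tonelli is applied in `ℝ≥0∞`; the identity then holds in `ℝ` for every `f`, both sides taking the
junk value `0` exactly when the `ℝ≥0∞` sums are infinite. -/
lemma tsum_norm_dotP_gaborFam_sq (hN : N ≠ 0)
    (hsupp : ∀ l, ∃ t, support (g l) ⊆ Set.Ico t (t + M)) (f : ℤ → ℂ) :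
    ∑' i, ‖dotP f (gaborFam L M N g i)‖ ^ 2 = ∑' j, ‖f j‖ ^ 2 * gaborWeight L M N g j := by
  rw [tsum_eq_toReal_tsum_ofReal fun _ => sq_nonneg _,
    tsum_eq_toReal_tsum_ofReal fun _ => mul_nonneg (sq_nonneg _) (gaborWeight_nonneg _)]
  simp_rw [ENNReal.ofReal_mul (sq_nonneg _), ofReal_gaborWeight hN hsupp,
    ENNReal.ofReal_pow (norm_nonneg _), ofReal_norm, tsum_enorm_dotP_gaborFam_sq hsupp f]

lemma tsum_dotP_gaborFam_mul_gaborFam (hN : N ≠ 0)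
    (hsupp : ∀ l, ∃ t, support (g l) ⊆ Set.Ico t (t + M)) (f : ℤ → ℂ) (j : ℤ) :
    ∑' i, dotP f (gaborFam L M N g i) * gaborFam L M N g i j = gaborWeight L M N g j * f j := by
  choose t ht using hsupp
  have hfin : (support fun i => dotP f (gaborFam L M N g i) * gaborFam L M N g i j).Finite := by
    refine (Set.finite_univ.prod ((Set.finite_iUnion fun l : Fin L =>
      finite_support_translate hN (ht l) j).prod Set.finite_univ)).subset ?_
    rintro ⟨l, n, m⟩ h
    simp only [Set.mem_prod, Set.mem_univ, true_and, and_true, Set.mem_iUnion]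
    exact ⟨l, right_ne_zero_of_mul (right_ne_zero_of_mul h)⟩
  have hsum : Summable _ := summable_of_hasFiniteSupport hfin
  rw [hsum.tsum_prod, tsum_fintype]
  simp_rw [(hsum.prod_factor _).tsum_prod, tsum_fintype]
  calc ∑ l : Fin L, ∑' n : ℤ, ∑ m : Fin M,
        dotP f (gaborAtom M N (g l) n m) * gaborAtom M N (g l) n m j
      = ∑ l : Fin L, ∑' n : ℤ, M * ‖g l (j - n * N)‖ ^ 2 * f j := by
        simp_rw [sum_dotP_gaborAtom_mul_gaborAtom (ht _)]
    _ = gaborWeight L M N g j * f j := by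
        rw [gaborWeight, ← Fin.sum_univ_eq_sum_range (fun l => ∑' n : ℤ, ‖g l (j - n * N)‖ ^ 2)]
        push_cast [ofReal_tsum]
        rw [Finset.mul_sum, Finset.sum_mul]
        simp_rw [← tsum_mul_left, ← tsum_mul_right]

end Gabor

section Frame

variable {ι : Type*} {S : Set ℤ} {F : ι → ℤ → ℂ} {w : ℤ → ℝ} {A B : ℝ}

lemma memL2S_single {j : ℤ} (hj : j ∈ S) : MemL2S S (Pi.single j 1) := by
  refine ⟨?_, fun i hi => Pi.single_eq_of_ne (by rintro rfl; exact hi hj) _⟩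
  rw [← lp.coeFn_single (E := fun _ : ℤ => ℂ)]
  exact (lp.single 2 j 1).2

lemma MemL2S.summable_norm_sq {f : ℤ → ℂ} (hf : MemL2S S f) : Summable fun j => ‖f j‖ ^ 2 := by
  simpa using hf.1.summable (by norm_num)

lemma isFrameOn_iff_of_tsum_norm_dotP_sq (hw : ∀ j, 0 ≤ w j)
    (hF : ∀ f, ∑' i, ‖dotP f (F i)‖ ^ 2 = ∑' j, ‖f j‖ ^ 2 * w j) :
    IsFrameOn S F A B ↔ ∀ j ∈ S, A ≤ w j ∧ w j ≤ B := by
  constructor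
  · intro hframe j hj
    have hnorm : normSq2 (Pi.single j 1) = 1 := by
      rw [normSq2, tsum_eq_single j fun i hi => by simp [hi]]
      simp
    have hweight : ∑' i, ‖(Pi.single j 1 : ℤ → ℂ) i‖ ^ 2 * w i = w j := by
      rw [tsum_eq_single j fun i hi => by simp [hi]]
      simp
    have := hframe _ (memL2S_single hj)
    rwa [hF, hweight, hnorm, mul_one, mul_one] at this
  · intro hbounds f hf
    have hle : ∀ j, A * ‖f j‖ ^ 2 ≤ ‖f j‖ ^ 2 * w j ∧ ‖f j‖ ^ 2 * w j ≤ B * ‖f j‖ ^ 2 := by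
      intro j
      by_cases hj : j ∈ S
      · obtain ⟨hA, hB⟩ := hbounds j hj
        constructor <;> nlinarith [sq_nonneg ‖f j‖]
      · simp [hf.2 j hj]
    have hsq := hf.summable_norm_sq
    have hsum : Summable fun j => ‖f j‖ ^ 2 * w j :=
      (hsq.mul_left B).of_nonneg_of_le (fun j => mul_nonneg (sq_nonneg _) (hw j)) fun j => (hle j).2
    rw [hF, normSq2, ← tsum_mul_left, ← tsum_mul_left]
    exact ⟨(hsq.mul_left A).tsum_le_tsum (fun j => (hle j).1) hsum,
      hsum.tsum_le_tsum (fun j => (hle j).2) (hsq.mul_left B)⟩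

end Frame

lemma forall_mem_iff_forall_mem_inter_Ico {N : ℕ} (hN : N ≠ 0) {S : Set ℤ}
    (hS : ∀ j ∈ S, ∀ n : ℤ, j + n * N ∈ S) {w : ℤ → ℝ} (hw : Periodic w N) (P : ℝ → Prop) :
    (∀ j ∈ S, P (w j)) ↔ ∀ j ∈ S ∩ Set.Ico 0 N, P (w j) := by
  refine ⟨fun h j hj => h j hj.1, fun h j hj => ?_⟩
  have hmod : j % N = j + -(j / N) * N := by rw [Int.emod_def]; ring
  have := h (j % N)
    ⟨hmod ▸ hS j hj _, Int.emod_nonneg _ (by omega), Int.emod_lt_of_pos _ (by omega)⟩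
  rwa [hmod, ← smul_eq_mul, hw.zsmul] at this

theorem stmt4_general (L M N : ℕ) (hN : 0 < N)
    (S : Set ℤ) (hS : IsPeriodicSet N S)
    (g : ℕ → ℤ → ℂ)
    (hsupp : ∀ l, ∃ a : ℤ, ∀ j : ℤ, g l j ≠ 0 → a ≤ j ∧ j < a + (M : ℤ))
    (A B : ℝ) :
    (IsFrameOn S (gaborFam L M N g) A B ↔
      ∀ j ∈ S ∩ Set.Ico (0 : ℤ) (N : ℤ),
        A ≤ (M : ℝ) * ∑ l ∈ Finset.range L, ∑' n : ℤ, ‖g l (j - n * (N : ℤ))‖ ^ 2 ∧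
        (M : ℝ) * ∑ l ∈ Finset.range L, ∑' n : ℤ, ‖g l (j - n * (N : ℤ))‖ ^ 2 ≤ B) ∧
    (IsFrameOn S (gaborFam L M N g) A B →
      ∀ f : ℤ → ℂ, MemL2S S f → ∀ j : ℤ,
        (∑' i : Fin L × ℤ × Fin M, dotP f (gaborFam L M N g i) * gaborFam L M N g i j) =
          (((M : ℝ) * ∑ l ∈ Finset.range L, ∑' n : ℤ, ‖g l (j - n * (N : ℤ))‖ ^ 2 : ℝ) : ℂ) * f j) := by
  refine ⟨?_, fun _ f _ j => tsum_dotP_gaborFam_mul_gaborFam hN.ne' hsupp f j⟩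
  rw [isFrameOn_iff_of_tsum_norm_dotP_sq gaborWeight_nonneg
    (tsum_norm_dotP_gaborFam_sq hN.ne' hsupp)]
  exact forall_mem_iff_forall_mem_inter_Ico hN.ne' hS.2 gaborWeight_periodic
    (fun x => A ≤ x ∧ x ≤ B)

theorem stmt4 (L M N : ℕ) (hL : 0 < L) (hM : 0 < M) (hN : 0 < N)
    (S : Set ℤ) (hS : IsPeriodicSet N S)
    (g : ℕ → ℤ → ℂ) (hg : ∀ l, MemL2S S (g l))
    (hsupp : ∀ l, ∃ a : ℤ, ∀ j : ℤ, g l j ≠ 0 → a ≤ j ∧ j < a + (M : ℤ))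
    (A B : ℝ) (hA : 0 < A) (hAB : A ≤ B) :
    (IsFrameOn S (gaborFam L M N g) A B ↔
      ∀ j ∈ S ∩ Set.Ico (0 : ℤ) (N : ℤ),
        A ≤ (M : ℝ) * ∑ l ∈ Finset.range L, ∑' n : ℤ, ‖g l (j - n * (N : ℤ))‖ ^ 2 ∧
        (M : ℝ) * ∑ l ∈ Finset.range L, ∑' n : ℤ, ‖g l (j - n * (N : ℤ))‖ ^ 2 ≤ B) ∧
    (IsFrameOn S (gaborFam L M N g) A B →
      ∀ f : ℤ → ℂ, MemL2S S f → ∀ j : ℤ,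
        (∑' i : Fin L × ℤ × Fin M, dotP f (gaborFam L M N g i) * gaborFam L M N g i j) =
          (((M : ℝ) * ∑ l ∈ Finset.range L, ∑' n : ℤ, ‖g l (j - n * (N : ℤ))‖ ^ 2 : ℝ) : ℂ) * f j) :=
  stmt4_general L M N hN S hS g hsupp A B
end

section
/- If the multiwindow Gabor system G(g,L,M,N) is a frame for ℓ²(S), then card(S ∩ {0,...,N−1}) ≤ LM. -/
open Complex MeasureTheory

/-!
Restrict the lower frame inequality to ℓ²(S ∩ [0, TN)), a space of dimension TK where
K = #(S ∩ [0, N)). The subspace orthogonal to the LM(T + 2W) atoms whose shift index lies in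
[-W, T + W) has dimension at least TK - LM(T + 2W). Summing the lower frame inequality over an
orthonormal basis of that subspace and applying Bessel's inequality bounds A times its dimension by
the energy on [0, TN) of the remaining atoms, which is at most M·TK times the tail of ∑ₗ |gₗ|²
outside [-WN, WN). Choosing W so that this tail is small and then T large forces K ≤ LM.
-/

open Finset Module
open scoped InnerProductSpace

section FrameCounting

variable {𝕜 V κ : Type*} [RCLike 𝕜] [NormedAddCommGroup V] [InnerProductSpace 𝕜 V]
  [FiniteDimensional 𝕜 V] {v : κ → V} {A R : ℝ} {near : Finset κ}

theorem mul_finrank_le_of_forall_inner_eq_zero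
    (hframe : ∀ f : V, A * ‖f‖ ^ 2 ≤ ∑' i, ‖⟪v i, f⟫_𝕜‖ ^ 2)
    (hfar : ∀ s : Finset κ, Disjoint s near → ∑ i ∈ s, ‖v i‖ ^ 2 ≤ R)
    (U : Submodule 𝕜 V) (hU : ∀ i ∈ near, ∀ u ∈ U, ⟪v i, u⟫_𝕜 = 0) :
    A * finrank 𝕜 U ≤ R := by
  classical
  set e : Fin (finrank 𝕜 U) → V := fun s => stdOrthonormalBasis 𝕜 U s
  have he : Orthonormal 𝕜 e := (stdOrthonormalBasis 𝕜 U).orthonormal.comp_linearIsometry U.subtypeₗᵢ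
  set c : κ → ℝ := fun i => ∑ s, ‖⟪v i, e s⟫_𝕜‖ ^ 2
  have hc_near : ∀ i ∈ near, c i = 0 := fun i hi =>
    sum_eq_zero fun s _ => by rw [hU i hi _ (stdOrthonormalBasis 𝕜 U s).2, norm_zero,
      zero_pow two_ne_zero]
  have hc_le : ∀ i, c i ≤ ‖v i‖ ^ 2 := fun i => by
    simpa only [c, norm_inner_symm] using he.sum_inner_products_le (v i) (s := univ)
  have hc_nonneg : 0 ≤ c := fun i => by positivity
  have hc_sum : ∀ t : Finset κ, ∑ i ∈ t, c i ≤ R := fun t => by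
    rw [← sum_filter_of_ne fun i _ hci hi => hci (hc_near i hi)]
    exact (sum_le_sum fun i _ => hc_le i).trans
      (hfar _ (disjoint_left.2 fun _ hi => (mem_filter.1 hi).2))
  have hc_summable : Summable c := summable_of_sum_le hc_nonneg hc_sum
  have h_summable : ∀ s, Summable fun i => ‖⟪v i, e s⟫_𝕜‖ ^ 2 := fun s =>
    hc_summable.of_nonneg_of_le (fun i => by positivity)
      fun i => single_le_sum (f := fun s => ‖⟪v i, e s⟫_𝕜‖ ^ 2)
        (fun _ _ => by positivity) (mem_univ s)
  calc A * finrank 𝕜 U = ∑ s, A * ‖e s‖ ^ 2 := by simp [he.1, mul_comm]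
    _ ≤ ∑ s, ∑' i, ‖⟪v i, e s⟫_𝕜‖ ^ 2 := sum_le_sum fun s _ => hframe (e s)
    _ = ∑' i, c i := (Summable.tsum_finsetSum fun s _ => h_summable s).symm
    _ ≤ R := Real.tsum_le_of_sum_le hc_nonneg hc_sum

theorem mul_finrank_le_mul_card_add (hA : 0 ≤ A)
    (hframe : ∀ f : V, A * ‖f‖ ^ 2 ≤ ∑' i, ‖⟪v i, f⟫_𝕜‖ ^ 2)
    (hfar : ∀ s : Finset κ, Disjoint s near → ∑ i ∈ s, ‖v i‖ ^ 2 ≤ R) :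
    A * finrank 𝕜 V ≤ A * #near + R := by
  classical
  set P := Submodule.span 𝕜 (near.image v : Set V)
  have hP : finrank 𝕜 P ≤ #near := (finrank_span_finset_le_card _).trans card_image_le
  have hU : ∀ i ∈ near, ∀ u ∈ Pᗮ, ⟪v i, u⟫_𝕜 = 0 := fun i hi _ hu =>
    Submodule.inner_right_of_mem_orthogonal
      (Submodule.subset_span (by simpa using ⟨i, hi, rfl⟩)) hu
  have hdim : (finrank 𝕜 V : ℝ) ≤ #near + finrank 𝕜 Pᗮ := by
    rw [← P.finrank_add_finrank_orthogonal]
    exact_mod_cast Nat.add_le_add_right hP _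
  nlinarith [mul_finrank_le_of_forall_inner_eq_zero hframe hfar Pᗮ hU]

end FrameCounting

section FiniteRestriction

variable (D : Finset ℤ)

def zeroExtend (f : EuclideanSpace ℂ D) : ℤ → ℂ := fun x => if h : x ∈ D then f ⟨x, h⟩ else 0

def restrictTo (h : ℤ → ℂ) : EuclideanSpace ℂ D := WithLp.toLp 2 fun j : D => h j

variable {D}

theorem tsum_zeroExtend {α : Type*} [AddCommMonoid α] [TopologicalSpace α]
    (f : EuclideanSpace ℂ D) (φ : ℤ → ℂ → α) (hφ : ∀ x, φ x 0 = 0) :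
    ∑' x, φ x (zeroExtend D f x) = ∑ j : D, φ j (f j) := by
  rw [tsum_eq_sum (s := D) fun x hx => by simp [zeroExtend, hx, hφ], ← sum_coe_sort]
  simp [zeroExtend]

theorem dotP_zeroExtend (f : EuclideanSpace ℂ D) (h : ℤ → ℂ) :
    dotP (zeroExtend D f) h = ⟪restrictTo D h, f⟫_ℂ := by
  rw [dotP, tsum_zeroExtend f (fun x z => z * starRingEnd ℂ (h x)) fun _ => zero_mul _,
    PiLp.inner_apply]
  simp [restrictTo]

theorem normSq2_zeroExtend (f : EuclideanSpace ℂ D) : normSq2 (zeroExtend D f) = ‖f‖ ^ 2 := by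
  rw [normSq2, tsum_zeroExtend f (fun _ z => ‖z‖ ^ 2) fun _ => by simp,
    EuclideanSpace.norm_sq_eq]

theorem memL2S_zeroExtend {S : Set ℤ} (hD : ↑D ⊆ S) (f : EuclideanSpace ℂ D) :
    MemL2S S (zeroExtend D f) := by
  have hsupp : ∀ x ∉ D, zeroExtend D f x = 0 := fun x hx => dif_neg hx
  refine ⟨memℓp_gen ?_, fun x hx => hsupp x fun h => hx (hD h)⟩
  exact summable_of_ne_finset_zero (s := D) fun x hx => by simp [hsupp x hx]

theorem IsFrameOn.lower_bound_restrictTo {ι : Type*} {S : Set ℤ} {F : ι → ℤ → ℂ} {A B : ℝ}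
    (hF : IsFrameOn S F A B) (hD : ↑D ⊆ S) (f : EuclideanSpace ℂ D) :
    A * ‖f‖ ^ 2 ≤ ∑' i, ‖⟪restrictTo D (F i), f⟫_ℂ‖ ^ 2 := by
  simpa only [normSq2_zeroExtend, dotP_zeroExtend] using (hF _ (memL2S_zeroExtend hD f)).1

end FiniteRestriction

section Periodic

variable {S : Set ℤ} {N : ℕ}

theorem add_mul_mem_iff (hS : ∀ j ∈ S, ∀ n : ℤ, j + n * N ∈ S) (j n : ℤ) :
    j + n * N ∈ S ↔ j ∈ S :=
  ⟨fun h => by simpa using hS _ h (-n), fun h => hS j h n⟩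

theorem card_filter_Ico_mul [DecidablePred (· ∈ S)] (hS : ∀ j ∈ S, ∀ n : ℤ, j + n * N ∈ S)
    (T : ℕ) : #{j ∈ Ico (0 : ℤ) (T * N) | j ∈ S} = T * #{j ∈ Ico (0 : ℤ) N | j ∈ S} := by
  induction T with
  | zero => simp
  | succ T ih =>
    have hblock : #{j ∈ Ico ((T : ℤ) * N) (N + T * N) | j ∈ S} = #{j ∈ Ico (0 : ℤ) N | j ∈ S} := by
      have hshift := map_add_right_Ico (0 : ℤ) N (T * N)
      rw [zero_add] at hshift
      rw [← hshift, filter_map, card_map]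
      congr 1
      exact filter_congr fun j _ => add_mul_mem_iff hS j T
    have hsplit : Ico (0 : ℤ) (N + T * N) = Ico 0 ((T : ℤ) * N) ∪ Ico ((T : ℤ) * N) (N + T * N) :=
      (Ico_union_Ico_eq_Ico (by positivity) (by omega)).symm
    rw [Nat.cast_succ, add_one_mul, add_comm, hsplit, filter_union, card_union_of_disjoint
      (disjoint_filter_filter (Ico_disjoint_Ico_consecutive _ _ _)), ih, hblock]
    ring

end Periodic

theorem ncard_inter_Ico_eq_card_filter {α : Type*} [Preorder α] [LocallyFiniteOrder α]
    (S : Set α) [DecidablePred (· ∈ S)] (a b : α) :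
    (S ∩ Set.Ico a b).ncard = #{j ∈ Ico a b | j ∈ S} := by
  rw [← Set.ncard_coe_finset]
  congr 1
  ext
  simp only [Set.mem_inter_iff, Set.mem_Ico, coe_filter, mem_Ico, Set.mem_ofPred_eq]
  tauto

theorem Memℓp.summable_norm_sq {α E : Type*} [NormedAddCommGroup E] {f : α → E}
    (hf : Memℓp f 2) : Summable fun x => ‖f x‖ ^ 2 := by
  simpa using (memℓp_gen_iff (by norm_num : 0 < (2 : ENNReal).toReal)).1 hf

theorem exists_tsum_compl_Ico_mul_le (G : ℤ → ℝ) {ε : ℝ} (hε : 0 < ε) {N : ℕ} (hN : 0 < N) :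
    ∃ W : ℕ, ∑' x : {x // x ∉ Ico (-(W * N : ℤ)) (W * N)}, G x ≤ ε := by
  obtain ⟨s₀, hs₀⟩ := Filter.eventually_atTop.1
    ((tendsto_order.1 (tendsto_tsum_compl_atTop_zero G)).2 ε hε)
  refine ⟨s₀.sup Int.natAbs + 1, (hs₀ _ fun x hx => ?_).le⟩
  have hx : x.natAbs ≤ s₀.sup Int.natAbs := le_sup (f := Int.natAbs) hx
  have hW : s₀.sup Int.natAbs + 1 ≤ (s₀.sup Int.natAbs + 1) * N := Nat.le_mul_of_pos_right _ hN
  rw [mem_Ico]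
  omega

theorem sum_comp_sub_mul_le_tsum_compl {G : ℤ → ℝ} (hG : Summable G) (hG0 : 0 ≤ G) {N : ℕ}
    (hN : 0 < N) {D t : Finset ℤ} {j : ℤ} (ht : ∀ n ∈ t, j - n * N ∉ D) :
    ∑ n ∈ t, G (j - n * N) ≤ ∑' x : {x // x ∉ D}, G x := by
  have hinj : Function.Injective fun n : t => (⟨j - n * N, ht n n.2⟩ : {x // x ∉ D}) :=
    fun n n' h => Subtype.ext <| mul_right_cancel₀ (by positivity : (N : ℤ) ≠ 0)
      (by simpa using congrArg Subtype.val h)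
  rw [← sum_coe_sort, ← tsum_fintype (L := .unconditional _)]
  exact tsum_comp_le_tsum_of_inj (hG.subtype _) (fun x => hG0 x.1) hinj

theorem sub_mul_notMem_Ico {N T W : ℕ} {j n : ℤ} (hj : j ∈ Ico 0 (T * N : ℤ))
    (hn : n ∉ Ico (-W : ℤ) (T + W)) : j - n * N ∉ Ico (-(W * N : ℤ)) (W * N) := by
  rw [mem_Ico] at hj hn ⊢
  rcases lt_or_ge n (-W) with hlt | hge
  · have : n * N ≤ (-W - 1) * N := mul_le_mul_of_nonneg_right (by omega) (by positivity)
    exact fun h => by linarith [h.2]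
  · have : ((T : ℤ) + W) * N ≤ n * N := mul_le_mul_of_nonneg_right (by omega) (by positivity)
    exact fun h => by linarith [h.1]

section Gabor

variable {L M N : ℕ} {g : ℕ → ℤ → ℂ}

theorem norm_gaborFam_apply (p : Fin L × ℤ × Fin M) (j : ℤ) :
    ‖gaborFam L M N g p j‖ = ‖g p.1 (j - p.2.1 * N)‖ := by
  simp [gaborFam, Complex.norm_exp]

theorem norm_sq_restrictTo_gaborFam (D : Finset ℤ) (p : Fin L × ℤ × Fin M) :
    ‖restrictTo D (gaborFam L M N g p)‖ ^ 2 = ∑ j ∈ D, ‖g p.1 (j - p.2.1 * N)‖ ^ 2 := by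
  rw [EuclideanSpace.norm_sq_eq, ← sum_coe_sort D]
  simp [restrictTo, norm_gaborFam_apply]

theorem sum_norm_sq_restrictTo_gaborFam_le (hN : 0 < N)
    (hg : ∀ l, Summable fun x => ‖g l x‖ ^ 2) {T W : ℕ} {D : Finset ℤ} (hD : D ⊆ Ico 0 (T * N))
    {s : Finset (Fin L × ℤ × Fin M)} (hs : Disjoint s (univ ×ˢ Ico (-W : ℤ) (T + W) ×ˢ univ)) :
    ∑ i ∈ s, ‖restrictTo D (gaborFam L M N g i)‖ ^ 2 ≤
      M * #D * ∑' x : {x // x ∉ Ico (-(W * N : ℤ)) (W * N)}, ∑ l : Fin L, ‖g l x‖ ^ 2 := by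
  set G : ℤ → ℝ := fun x => ∑ l : Fin L, ‖g l x‖ ^ 2
  set t := s.image fun i => i.2.1
  have ht : ∀ n ∈ t, n ∉ Ico (-W : ℤ) (T + W) := by
    simp only [t, mem_image]
    rintro n ⟨i, hi, rfl⟩ hn
    exact disjoint_left.1 hs hi (by simp [mem_product, hn])
  have hst : s ⊆ univ ×ˢ t ×ˢ univ := fun i hi => by
    simp only [mem_product, mem_univ, true_and, and_true, t]
    exact mem_image_of_mem _ hi
  calc ∑ i ∈ s, ‖restrictTo D (gaborFam L M N g i)‖ ^ 2
      ≤ ∑ i ∈ univ ×ˢ t ×ˢ univ, ‖restrictTo D (gaborFam L M N g i)‖ ^ 2 :=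
        sum_le_sum_of_subset_of_nonneg hst fun _ _ _ => by positivity
    _ = M * ∑ j ∈ D, ∑ n ∈ t, G (j - n * N) := by
        simp only [sum_product, norm_sq_restrictTo_gaborFam, sum_const, card_univ,
          Fintype.card_fin, nsmul_eq_mul, G, mul_sum]
        rw [sum_comm, sum_congr rfl fun n _ => sum_comm]
        exact sum_comm
    _ ≤ M * ∑ _j ∈ D, ∑' x : {x // x ∉ Ico (-(W * N : ℤ)) (W * N)}, G x := by
        gcongr with j hj
        exact sum_comp_sub_mul_le_tsum_compl (G := G) (summable_sum fun l _ => hg l)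
          (fun x => sum_nonneg fun l _ => by positivity) hN
          fun n hn => sub_mul_notMem_Ico (hD hj) (ht n hn)
    _ = _ := by rw [sum_const, nsmul_eq_mul]; ring

end Gabor

theorem mul_card_le_of_isFrameOn_gaborFam {L M N : ℕ} (hN : 0 < N) {S : Set ℤ}
    [DecidablePred (· ∈ S)] (hS : ∀ j ∈ S, ∀ n : ℤ, j + n * N ∈ S) {g : ℕ → ℤ → ℂ}
    (hg : ∀ l, Summable fun x => ‖g l x‖ ^ 2) {A B : ℝ} (hA : 0 ≤ A)
    (hF : IsFrameOn S (gaborFam L M N g) A B) (T W : ℕ) :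
    A * (T * #{j ∈ Ico (0 : ℤ) N | j ∈ S}) ≤ A * (L * (T + 2 * W) * M) +
      M * (T * #{j ∈ Ico (0 : ℤ) N | j ∈ S}) *
        ∑' x : {x // x ∉ Ico (-(W * N : ℤ)) (W * N)}, ∑ l : Fin L, ‖g l x‖ ^ 2 := by
  set D := {j ∈ Ico (0 : ℤ) (T * N) | j ∈ S}
  have hcount := mul_finrank_le_mul_card_add hA
    (hF.lower_bound_restrictTo (D := D) fun _ hx => (mem_filter.1 hx).2)
    (near := univ ×ˢ Ico (-W : ℤ) (T + W) ×ˢ univ)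
    fun s hs => sum_norm_sq_restrictTo_gaborFam_le hN hg (filter_subset _ _) hs
  have hnear : #((univ : Finset (Fin L)) ×ˢ Ico (-W : ℤ) (T + W) ×ˢ (univ : Finset (Fin M))) =
      L * (T + 2 * W) * M := by
    simp only [card_product, card_univ, Fintype.card_fin, Int.card_Ico]
    rw [← mul_assoc]
    congr 2
    omega
  rw [finrank_euclideanSpace, Fintype.card_coe, card_filter_Ico_mul hS, hnear] at hcount
  exact_mod_cast hcount

theorem stmt5_general (L M N : ℕ) (hM : 0 < M) (hN : 0 < N)
    (S : Set ℤ) (hS : IsPeriodicSet N S)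
    (g : ℕ → ℤ → ℂ) (hg : ∀ l, MemL2S S (g l))
    (hframe : ∃ A B : ℝ, 0 < A ∧ A ≤ B ∧ IsFrameOn S (gaborFam L M N g) A B) :
    (S ∩ Set.Ico (0 : ℤ) (N : ℤ)).ncard ≤ L * M := by
  classical
  obtain ⟨A, B, hA, -, hF⟩ := hframe
  rw [ncard_inter_Ico_eq_card_filter]
  set K := #{j ∈ Ico (0 : ℤ) N | j ∈ S}
  by_contra! hLM
  have hK : (L : ℝ) * M + 1 ≤ K := by exact_mod_cast hLM
  have hK0 : (0 : ℝ) < K := lt_of_lt_of_le (by positivity) hK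
  obtain ⟨W, hW⟩ := exists_tsum_compl_Ico_mul_le (fun x => ∑ l : Fin L, ‖g l x‖ ^ 2)
    (ε := A / (2 * M * K)) (div_pos hA (mul_pos (by positivity) hK0)) hN
  -- with this T the boundary term 2LMW is smaller than T / 2
  set T := 4 * L * M * W + 1
  have hcount := mul_card_le_of_isFrameOn_gaborFam hN hS.2 (fun l => (hg l).1.summable_norm_sq)
    hA.le hF T W
  have htail : (M : ℝ) * (T * K) * (A / (2 * M * K)) = A * T / 2 := by
    field_simp
  have hT : (T : ℝ) = 4 * L * M * W + 1 := by push_cast [T]; ring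
  nlinarith [mul_le_mul_of_nonneg_left hW (by positivity : (0 : ℝ) ≤ M * (T * K)),
    mul_le_mul_of_nonneg_left hK (by positivity : (0 : ℝ) ≤ A * T)]

theorem stmt5 (L M N : ℕ) (hL : 0 < L) (hM : 0 < M) (hN : 0 < N)
    (S : Set ℤ) (hS : IsPeriodicSet N S)
    (g : ℕ → ℤ → ℂ) (hg : ∀ l, MemL2S S (g l))
    (hframe : ∃ A B : ℝ, 0 < A ∧ A ≤ B ∧ IsFrameOn S (gaborFam L M N g) A B) :
    (S ∩ Set.Ico (0 : ℤ) (N : ℤ)).ncard ≤ L * M :=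
  stmt5_general L M N hM hN S hS g hg hframe
end

section
/- The multiwindow Gabor system G(g,L,M,N) is a Parseval frame for ℓ²(S) if and only if (a) for all j ∈ S ∩ {0,...,N−1}, ∑_{l=0}^{L-1} ∑_{n∈ℤ} |g_l(j−nN)|² = 1/M, and (b) for all j ∈ S ∩ {0,...,N−1} and all k ∈ ℤ∖{0}, ∑_{l=0}^{L-1} ∑_{n∈ℤ} g_l(j−nN)·conj(g_l(j+kM−nN)) = 0. -/
open Complex MeasureTheory

/-! For `f` supported on a finite set, summing `|⟨f, E_{m/M} T_{nN} g_l⟩|²` over the modulations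
`m` is the orthogonality of the characters of `ℤ/M`, and what is left is a Hermitian form
`∑ f(j) conj(f(j')) K(j, j')` whose kernel vanishes unless `M ∣ j' - j` and satisfies
`K(j, j + kM) = M · conj (∑_l (M_{g_l}(j) M_{g_l}(j)^*)_{0,k})`. Parseval on finitely supported
vectors says the form is `∑ |f(j)|²`, which by polarization means `K = δ` on `S × S`; by the
`N`-periodicity of `S` and of the matrix entries in `j`, this is exactly (a) and (b).

Parseval passes from finitely supported vectors to all of `ℓ²(S)` by density: Bessel's
inequality is a closed condition, and the triangle inequality for the coefficient sequences in
`ℓ²` then gives the reverse inequality in the limit. -/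

open Finset ComplexConjugate Filter Topology Real
open scoped lp

theorem IsPrimitiveRoot.sum_range_pow_zpow {K : Type*} [Field K] {ζ : K} {M : ℕ}
    (hζ : IsPrimitiveRoot ζ M) (d : ℤ) :
    ∑ m ∈ range M, (ζ ^ d) ^ m = if (M : ℤ) ∣ d then (M : K) else 0 := by
  split_ifs with hd
  · simp [(hζ.zpow_eq_one_iff_dvd d).2 hd]
  · rw [geom_sum_eq (mt (hζ.zpow_eq_one_iff_dvd d).1 hd), ← zpow_natCast, ← zpow_mul,
      mul_comm, zpow_mul, zpow_natCast, hζ.pow_eq_one, one_zpow, sub_self, zero_div]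

theorem IsPrimitiveRoot.sum_range_norm_sq_sum_mul_conj_zpow {ζ : ℂ} {M : ℕ}
    (hζ : IsPrimitiveRoot ζ M) (hM : M ≠ 0) (a : ℤ → ℂ) (T : Finset ℤ) :
    ∑ m ∈ range M, ((‖∑ j ∈ T, a j * conj (ζ ^ ((m : ℤ) * j))‖ ^ 2 : ℝ) : ℂ) =
      M * ∑ j ∈ T, ∑ j' ∈ T, if (M : ℤ) ∣ j' - j then a j * conj (a j') else 0 := by
  have hconj : conj ζ = ζ⁻¹ := (Complex.inv_eq_conj (hζ.norm'_eq_one hM)).symm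
  have hζ0 : ζ ≠ 0 := hζ.ne_zero hM
  have hterm : ∀ (m : ℕ) (j j' : ℤ), conj (ζ ^ ((m : ℤ) * j)) * ζ ^ ((m : ℤ) * j') =
      (ζ ^ (j' - j)) ^ m := by
    intro m j j'
    rw [map_zpow₀, hconj, inv_zpow', ← zpow_add₀ hζ0, ← zpow_natCast, ← zpow_mul]
    ring_nf
  simp_rw [Complex.ofReal_pow, ← Complex.mul_conj', map_sum, map_mul, Complex.conj_conj,
    Finset.sum_mul_sum]
  rw [Finset.sum_comm, Finset.mul_sum]
  refine Finset.sum_congr rfl fun j _ => ?_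
  rw [Finset.sum_comm, Finset.mul_sum]
  refine Finset.sum_congr rfl fun j' _ => ?_
  calc ∑ m ∈ range M, a j * conj (ζ ^ ((m : ℤ) * j)) * (conj (a j') * ζ ^ ((m : ℤ) * j'))
      = a j * conj (a j') * ∑ m ∈ range M, (ζ ^ (j' - j)) ^ m := by
        rw [Finset.mul_sum]
        exact Finset.sum_congr rfl fun m _ => by rw [← hterm]; ring
    _ = _ := by rw [hζ.sum_range_pow_zpow]; split_ifs <;> ring

theorem sum_kernel_eq_sum_norm_sq_iff {α : Type*} [DecidableEq α] {S : Set α} {Γ : α → α → ℂ} :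
    (∀ (T : Finset α) (f : α → ℂ), ↑T ⊆ S → (∀ x ∉ T, f x = 0) →
        ∑ j ∈ T, ∑ j' ∈ T, f j * conj (f j') * Γ j j' = ∑ j ∈ T, ((‖f j‖ ^ 2 : ℝ) : ℂ)) ↔
      ∀ j ∈ S, ∀ j' ∈ S, Γ j j' = if j = j' then 1 else 0 := by
  constructor
  · intro h j hj j' hj'
    have hdiag : ∀ x ∈ S, Γ x x = 1 := fun x hx => by
      simpa [Pi.single_apply] using
        h {x} (Pi.single x 1) (by simpa using hx) (fun y hy => by simp_all)
    -- Test with `δ_j + c δ_{j'}`: the diagonal terms cancel against `‖f‖²` by `hdiag`.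
    have hcross : ∀ c : ℂ, j ≠ j' → conj c * Γ j j' + c * Γ j' j = 0 := by
      intro c hne
      have := h {j, j'} (Pi.single j 1 + Pi.single j' c)
        (by simp [Set.insert_subset_iff, hj, hj'])
        (fun y hy => by simp_all)
      simp only [Pi.add_apply, Pi.single_apply, map_add, MonoidWithZeroHom.map_ite_one_zero,
        Finset.sum_pair hne, ↓reduceIte, hne, hne.symm, map_zero, add_zero, zero_add, mul_one,
        one_mul, hdiag j hj, hdiag j' hj', Complex.mul_conj', ← Complex.ofReal_pow, norm_one,
        one_pow, Complex.ofReal_one] at this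
      linear_combination this
    split_ifs with hjj
    · exact hjj ▸ hdiag j hj
    · have h1 := hcross 1 hjj
      have hI := hcross I hjj
      rw [map_one] at h1
      rw [conj_I] at hI
      linear_combination (1 / 2 : ℂ) * h1 + (I / 2) * hI + (Γ j j' - Γ j' j) / 2 * I_sq
  · intro h T f hT _
    refine Finset.sum_congr rfl fun j hj => ?_
    rw [Finset.sum_eq_single j]
    · rw [h j (hT hj) j (hT hj), if_pos rfl, mul_one, Complex.mul_conj', Complex.ofReal_pow]
    · intro j' hj' hne
      rw [h j (hT hj) j' (hT hj'), if_neg hne.symm, mul_zero]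
    · intro hj'; exact absurd hj hj'

theorem hasSum_ofReal_prod_of_nonneg {β γ : Type*} [Fintype γ] {φ : β × γ → ℝ} (hφ : 0 ≤ φ)
    {z : ℂ} (h : HasSum (fun b => ∑ c, (φ (b, c) : ℂ)) z) : HasSum (fun p => (φ p : ℂ)) z := by
  have hre : HasSum (fun b => ∑ c, φ (b, c)) z.re := by simpa using Complex.hasSum_re h
  have hz : (z.re : ℂ) = z := (Complex.hasSum_ofReal.2 hre).unique (by simpa using h)
  have hsum : Summable φ := (summable_prod_of_nonneg hφ).2
    ⟨fun _ => (hasSum_fintype _).summable, by simpa only [tsum_fintype] using hre.summable⟩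
  have htsum : ∑' p, φ p = z.re := by
    rw [hsum.tsum_prod' fun _ => (hasSum_fintype _).summable]
    simpa only [tsum_fintype] using hre.tsum_eq
  rw [← hz]
  exact Complex.hasSum_ofReal.2 (htsum ▸ hsum.hasSum)

section Bessel

variable (𝕜 : Type*) {E ι : Type*} [RCLike 𝕜] [NormedAddCommGroup E] [InnerProductSpace 𝕜 E]

def BesselAt (v : ι → E) (x : E) : Prop :=
  ∀ I : Finset ι, ∑ i ∈ I, ‖inner 𝕜 (v i) x‖ ^ 2 ≤ ‖x‖ ^ 2

variable {𝕜}

theorem isClosed_setOf_besselAt (v : ι → E) : IsClosed {x : E | BesselAt 𝕜 v x} := by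
  simp only [BesselAt, Set.ofPred_forall]
  exact isClosed_iInter fun I => isClosed_le (by fun_prop) (by fun_prop)

theorem HasSum.besselAt {v : ι → E} {x : E}
    (h : HasSum (fun i => ‖inner 𝕜 (v i) x‖ ^ 2) (‖x‖ ^ 2)) : BesselAt 𝕜 v x :=
  fun I => sum_le_hasSum I (fun _ _ => by positivity) h

namespace BesselAt

variable {v : ι → E} {x : E}

theorem summable (h : BesselAt 𝕜 v x) : Summable fun i => ‖inner 𝕜 (v i) x‖ ^ 2 :=
  summable_of_sum_le (fun _ => by positivity) h

theorem tsum_le (h : BesselAt 𝕜 v x) : ∑' i, ‖inner 𝕜 (v i) x‖ ^ 2 ≤ ‖x‖ ^ 2 :=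
  h.summable.tsum_le_of_sum_le h

end BesselAt

theorem lp.norm_sq_eq_tsum (a : lp (fun _ : ι => 𝕜) 2) : ‖a‖ ^ 2 = ∑' i, ‖a i‖ ^ 2 := by
  simpa using lp.norm_rpow_eq_tsum (p := 2) (by norm_num) a

theorem memℓp_two_iff_summable {a : ι → 𝕜} : Memℓp a 2 ↔ Summable fun i => ‖a i‖ ^ 2 := by
  simpa using memℓp_gen_iff (p := 2) (f := a) (by norm_num)

theorem sqrt_tsum_norm_sq_add_le {a b : ι → 𝕜} (ha : Summable fun i => ‖a i‖ ^ 2)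
    (hb : Summable fun i => ‖b i‖ ^ 2) :
    √(∑' i, ‖a i + b i‖ ^ 2) ≤ √(∑' i, ‖a i‖ ^ 2) + √(∑' i, ‖b i‖ ^ 2) := by
  let A : lp (fun _ : ι => 𝕜) 2 := ⟨a, memℓp_two_iff_summable.2 ha⟩
  let B : lp (fun _ : ι => 𝕜) 2 := ⟨b, memℓp_two_iff_summable.2 hb⟩
  have hnorm (c : lp (fun _ : ι => 𝕜) 2) : √(∑' i, ‖c i‖ ^ 2) = ‖c‖ := by
    rw [← lp.norm_sq_eq_tsum, Real.sqrt_sq (norm_nonneg c)]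
  exact (hnorm (A + B)).trans_le ((norm_add_le A B).trans_eq (by rw [← hnorm, ← hnorm]))

theorem hasSum_norm_sq_inner_of_tendsto {v : ι → E} {α : Type*} {l : Filter α} [l.NeBot]
    {y : α → E} {x : E} (hy : Tendsto y l (𝓝 x))
    (hpars : ∀ a, HasSum (fun i => ‖inner 𝕜 (v i) (y a)‖ ^ 2) (‖y a‖ ^ 2))
    (hdiff : ∀ a, BesselAt 𝕜 v (y a - x)) :
    HasSum (fun i => ‖inner 𝕜 (v i) x‖ ^ 2) (‖x‖ ^ 2) := by
  have hx : BesselAt 𝕜 v x :=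
    (isClosed_setOf_besselAt v).mem_of_tendsto hy (Eventually.of_forall fun a => (hpars a).besselAt)
  have hle : ∀ a, ‖y a‖ ≤ √(∑' i, ‖inner 𝕜 (v i) x‖ ^ 2) + ‖y a - x‖ := by
    intro a
    have hsplit : ∀ i, inner 𝕜 (v i) (y a) = inner 𝕜 (v i) x + inner 𝕜 (v i) (y a - x) := by
      intro i; rw [← inner_add_right, add_sub_cancel]
    calc ‖y a‖ = √(∑' i, ‖inner 𝕜 (v i) (y a)‖ ^ 2) := by
          rw [(hpars a).tsum_eq, Real.sqrt_sq (norm_nonneg _)]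
      _ ≤ √(∑' i, ‖inner 𝕜 (v i) x‖ ^ 2) + √(∑' i, ‖inner 𝕜 (v i) (y a - x)‖ ^ 2) := by
          simp_rw [hsplit]; exact sqrt_tsum_norm_sq_add_le hx.summable (hdiff a).summable
      _ ≤ √(∑' i, ‖inner 𝕜 (v i) x‖ ^ 2) + ‖y a - x‖ := by
          grw [(hdiff a).tsum_le, Real.sqrt_sq (norm_nonneg _)]
  have hlim : Tendsto (fun a => √(∑' i, ‖inner 𝕜 (v i) x‖ ^ 2) + ‖y a - x‖) l
      (𝓝 (√(∑' i, ‖inner 𝕜 (v i) x‖ ^ 2) + 0)) :=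
    tendsto_const_nhds.add (tendsto_iff_norm_sub_tendsto_zero.1 hy)
  have hge : ‖x‖ ^ 2 ≤ ∑' i, ‖inner 𝕜 (v i) x‖ ^ 2 := by
    rw [← Real.le_sqrt (norm_nonneg x) (tsum_nonneg fun _ => by positivity), ← add_zero √_]
    exact le_of_tendsto_of_tendsto' hy.norm hlim hle
  exact (le_antisymm hx.tsum_le hge) ▸ hx.summable.hasSum

end Bessel

theorem dotP_eq_inner {f h : ℤ → ℂ} (hf : Memℓp f 2) (hh : Memℓp h 2) :
    dotP f h = inner ℂ (⟨h, hh⟩ : ℓ²(ℤ, ℂ)) ⟨f, hf⟩ := by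
  rw [lp.inner_eq_tsum, dotP]
  exact tsum_congr fun j => by simp

theorem normSq2_eq_norm_sq {f : ℤ → ℂ} (hf : Memℓp f 2) :
    normSq2 f = ‖(⟨f, hf⟩ : ℓ²(ℤ, ℂ))‖ ^ 2 :=
  (lp.norm_sq_eq_tsum (⟨f, hf⟩ : ℓ²(ℤ, ℂ))).symm

theorem hasSum_norm_sq_dotP_of_finite_support {ι : Type*} {S : Set ℤ} {F : ι → ℤ → ℂ}
    (hF : ∀ i, Memℓp (F i) 2)
    (hfin : ∀ (T : Finset ℤ) (f : ℤ → ℂ), ↑T ⊆ S → (∀ j ∉ T, f j = 0) →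
      HasSum (fun i => ‖dotP f (F i)‖ ^ 2) (normSq2 f))
    {f : ℤ → ℂ} (hf : MemL2S S f) :
    HasSum (fun i => ‖dotP f (F i)‖ ^ 2) (normSq2 f) := by
  let v (i : ι) : ℓ²(ℤ, ℂ) := ⟨F i, hF i⟩
  let K : Set ℓ²(ℤ, ℂ) := {x | ∀ j ∉ S, x j = 0}
  have hparseval (x : ℓ²(ℤ, ℂ)) (hx : x ∈ K) (T : Finset ℤ) (hxT : ∀ j ∉ T, x j = 0) :
      HasSum (fun i => ‖inner ℂ (v i) x‖ ^ 2) (‖x‖ ^ 2) := by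
    classical
    have hxST : ∀ j ∉ T.filter (· ∈ S), x j = 0 := fun j hj => by
      by_cases hjT : j ∈ T
      · exact hx j fun hjS => hj (Finset.mem_filter.2 ⟨hjT, hjS⟩)
      · exact hxT j hjT
    simpa only [dotP_eq_inner x.2 (hF _), normSq2_eq_norm_sq x.2] using
      hfin _ x (fun j hj => (Finset.mem_filter.1 hj).2) hxST
  let y (x : ℓ²(ℤ, ℂ)) (T : Finset ℤ) : ℓ²(ℤ, ℂ) := ∑ j ∈ T, lp.single 2 j (x j)
  have hy_apply (x : ℓ²(ℤ, ℂ)) (T : Finset ℤ) (j : ℤ) : y x T j = if j ∈ T then x j else 0 := by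
    simp only [y, lp.coeFn_sum, lp.coeFn_single, Finset.sum_apply, Finset.sum_pi_single]
  have hy_mem (x : ℓ²(ℤ, ℂ)) (hx : x ∈ K) (T : Finset ℤ) : y x T ∈ K :=
    fun j hj => by simp [hy_apply, hx j hj]
  have hy_tendsto (x : ℓ²(ℤ, ℂ)) : Tendsto (y x) atTop (𝓝 x) :=
    lp.hasSum_single ENNReal.ofNat_ne_top x
  have hbessel (x : ℓ²(ℤ, ℂ)) (hx : x ∈ K) : BesselAt ℂ v x :=
    (isClosed_setOf_besselAt v).mem_of_tendsto (hy_tendsto x) <| Eventually.of_forall fun T =>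
      (hparseval _ (hy_mem x hx T) T fun j hj => by simp [hy_apply, hj]).besselAt
  let x : ℓ²(ℤ, ℂ) := ⟨f, hf.1⟩
  have hxK : x ∈ K := hf.2
  have := hasSum_norm_sq_inner_of_tendsto (hy_tendsto x)
    (fun T => hparseval _ (hy_mem x hxK T) T fun j hj => by simp [hy_apply, hj])
    (fun T => hbessel _ fun j hj => by simp [hy_apply, hxK j hj])
  simpa only [dotP_eq_inner hf.1 (hF _), normSq2_eq_norm_sq hf.1] using this

theorem isFrameOn_one_one_iff {ι : Type*} {S : Set ℤ} {F : ι → ℤ → ℂ} (hF : ∀ i, Memℓp (F i) 2)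
    (hsumm : ∀ (T : Finset ℤ) (f : ℤ → ℂ), (∀ j ∉ T, f j = 0) →
      Summable fun i => ‖dotP f (F i)‖ ^ 2) :
    IsFrameOn S F 1 1 ↔ ∀ (T : Finset ℤ) (f : ℤ → ℂ), ↑T ⊆ S → (∀ j ∉ T, f j = 0) →
      ∑' i, ‖dotP f (F i)‖ ^ 2 = normSq2 f := by
  constructor
  · intro h T f hTS hfT
    have hf : MemL2S S f :=
      ⟨memℓp_two_iff_summable.2 <| summable_of_ne_finset_zero (s := T) fun j hj => by
        simp [hfT j hj], fun j hj => hfT j fun hjT => hj (hTS hjT)⟩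
    obtain ⟨hge, hle⟩ := h f hf
    rw [one_mul] at hge hle
    exact le_antisymm hle hge
  · intro h f hf
    have := hasSum_norm_sq_dotP_of_finite_support hF
      (fun T f hTS hfT => h T f hTS hfT ▸ (hsumm T f hfT).hasSum) hf
    simp [this.tsum_eq]

theorem summable_conj_mul_sub_mul {φ : ℤ → ℂ} (hφ : Memℓp φ 2) {N : ℕ} (hN : 0 < N)
    (j j' : ℤ) : Summable fun n : ℤ => conj (φ (j - n * N)) * φ (j' - n * N) := by
  have hs := memℓp_two_iff_summable.1 hφ
  have hinj (c : ℤ) : Function.Injective fun n : ℤ => c - n * N := fun n n' h => by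
    simpa [hN.ne'] using h
  refine .of_norm_bounded ((hs.comp_injective (hinj j)).add (hs.comp_injective (hinj j')))
    fun n => ?_
  simp only [norm_mul, Complex.norm_conj, Function.comp_apply]
  nlinarith [norm_nonneg (φ (j - n * N)), norm_nonneg (φ (j' - n * N))]

theorem IsPeriodicSet.exists_mem_Ico {N : ℕ} {S : Set ℤ} (hS : IsPeriodicSet N S) (hN : 0 < N)
    {j : ℤ} (hj : j ∈ S) : ∃ r ∈ S ∩ Set.Ico 0 (N : ℤ), ∃ t : ℤ, j = r + t * N := by
  have hr : j % N = j + -(j / N) * N := by rw [Int.emod_def]; ring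
  refine ⟨j % N, ⟨hr ▸ hS.2 j hj _, Int.emod_nonneg j (by omega), Int.emod_lt_of_pos j (by omega)⟩,
    j / N, by linarith⟩

section MatEntry

variable {M N : ℕ} {φ ψ : ℤ → ℂ}

theorem matEntry_add_mul (j k t : ℤ) : matEntry M N φ ψ (j + t * N) k = matEntry M N φ ψ j k := by
  rw [matEntry, matEntry, ← (Equiv.addRight t).tsum_eq]
  exact tsum_congr fun n => by simp only [Equiv.coe_addRight]; ring_nf

theorem matEntry_eq_zero {S : Set ℤ} (hS : IsPeriodicSet N S) (hψ : ∀ x ∉ S, ψ x = 0)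
    {j k : ℤ} (hjk : j + k * M ∉ S) : matEntry M N φ ψ j k = 0 := by
  refine (tsum_congr fun n => ?_).trans tsum_zero
  rw [hψ _ fun h => hjk (by simpa using hS.2 _ h n), map_zero, mul_zero]

theorem conj_matEntry (j k : ℤ) :
    conj (matEntry M N φ ψ j k) = ∑' n : ℤ, conj (φ (j - n * N)) * ψ (j + k * M - n * N) := by
  rw [matEntry, Complex.conj_tsum]
  exact tsum_congr fun n => by rw [map_mul, Complex.conj_conj, mul_comm]

end MatEntry

/-- `gaborKernel L M N g j j' = ⟨S δ_j, δ_j'⟩` for the frame operator `S` of the Gabor system. -/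
noncomputable def gaborKernel (L M N : ℕ) (g : ℕ → ℤ → ℂ) (j j' : ℤ) : ℂ :=
  if (M : ℤ) ∣ j' - j then
    M * ∑ l ∈ range L, ∑' n : ℤ, conj (g l (j - n * N)) * g l (j' - n * N)
  else 0

section Gabor

variable {L M N : ℕ} {g : ℕ → ℤ → ℂ} {f : ℤ → ℂ} {T : Finset ℤ}

theorem gaborFam_apply (l : Fin L) (n : ℤ) (m : Fin M) (j : ℤ) :
    gaborFam L M N g (l, n, m) j = cexp (2 * π * I / M) ^ ((m : ℤ) * j) * g l (j - n * N) := by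
  rw [gaborFam, ← Complex.exp_int_mul]
  push_cast
  ring_nf

theorem memℓp_gaborFam (hg : ∀ l, Memℓp (g l) 2) (i : Fin L × ℤ × Fin M) :
    Memℓp (gaborFam L M N g i) 2 := by
  obtain ⟨l, n, m⟩ := i
  have hζ : ‖cexp (2 * π * I / M)‖ = 1 := by simp [Complex.norm_exp]
  refine memℓp_two_iff_summable.2 ?_
  simp only [gaborFam_apply, norm_mul, norm_zpow, hζ, one_zpow, one_mul]
  exact (Equiv.subRight (n * N : ℤ)).summable_iff.2 (memℓp_two_iff_summable.1 (hg l))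

theorem dotP_gaborFam (hf : ∀ j ∉ T, f j = 0) (l : Fin L) (n : ℤ) (m : Fin M) :
    dotP f (gaborFam L M N g (l, n, m)) =
      ∑ j ∈ T, f j * conj (g l (j - n * N)) * conj (cexp (2 * π * I / M) ^ ((m : ℤ) * j)) := by
  rw [dotP, tsum_eq_sum fun j hj => by simp [hf j hj]]
  exact Finset.sum_congr rfl fun j _ => by rw [gaborFam_apply, map_mul]; ring

theorem sum_norm_sq_dotP_gaborFam (hM : 0 < M) (hf : ∀ j ∉ T, f j = 0) (l : Fin L) (n : ℤ) :
    ∑ m : Fin M, ((‖dotP f (gaborFam L M N g (l, n, m))‖ ^ 2 : ℝ) : ℂ) =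
      M * ∑ j ∈ T, ∑ j' ∈ T, if (M : ℤ) ∣ j' - j then
        f j * conj (f j') * (conj (g l (j - n * N)) * g l (j' - n * N)) else 0 := by
  simp_rw [dotP_gaborFam hf]
  rw [Fin.sum_univ_eq_sum_range (fun m => ((‖∑ j ∈ T, f j * conj (g l (j - n * N)) *
      conj (cexp (2 * π * I / M) ^ ((m : ℤ) * j))‖ ^ 2 : ℝ) : ℂ)),
    (Complex.isPrimitiveRoot_exp M hM.ne').sum_range_norm_sq_sum_mul_conj_zpow hM.ne']
  simp only [map_mul, Complex.conj_conj]
  congr 1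
  refine Finset.sum_congr rfl fun j _ => Finset.sum_congr rfl fun j' _ => ?_
  split_ifs <;> ring

theorem hasSum_norm_sq_dotP_gaborFam (hM : 0 < M) (hN : 0 < N) (hg : ∀ l, Memℓp (g l) 2)
    (hf : ∀ j ∉ T, f j = 0) :
    HasSum (fun i => ((‖dotP f (gaborFam L M N g i)‖ ^ 2 : ℝ) : ℂ))
      (∑ j ∈ T, ∑ j' ∈ T, f j * conj (f j') * gaborKernel L M N g j j') := by
  have hl (l : Fin L) : HasSum (fun n : ℤ => ∑ m : Fin M,
      ((‖dotP f (gaborFam L M N g (l, n, m))‖ ^ 2 : ℝ) : ℂ))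
      (M * ∑ j ∈ T, ∑ j' ∈ T, if (M : ℤ) ∣ j' - j then
        f j * conj (f j') * ∑' n : ℤ, conj (g l (j - n * N)) * g l (j' - n * N) else 0) := by
    simp_rw [sum_norm_sq_dotP_gaborFam hM hf]
    refine .mul_left _ (hasSum_sum fun j _ => hasSum_sum fun j' _ => ?_)
    split_ifs
    · exact ((summable_conj_mul_sub_mul (hg l) hN j j').hasSum).mul_left _
    · exact hasSum_zero
  let e : ℤ × (Fin L × Fin M) ≃ Fin L × ℤ × Fin M :=
    ⟨fun p => (p.2.1, p.1, p.2.2), fun p => (p.2.1, p.1, p.2.2), fun _ => rfl, fun _ => rfl⟩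
  refine e.hasSum_iff.1 (hasSum_ofReal_prod_of_nonneg (fun _ => by positivity) ?_)
  convert hasSum_sum (s := univ) fun l _ => hl l using 1
  · ext n; exact Fintype.sum_prod_type _
  · simp only [gaborKernel, Finset.sum_range, Finset.mul_sum]
    refine (Finset.sum_comm.trans <| Finset.sum_congr rfl fun j _ =>
      Finset.sum_comm.trans <| Finset.sum_congr rfl fun j' _ => ?_).symm
    split_ifs
    · rw [Finset.mul_sum]
      exact Finset.sum_congr rfl fun l _ => by ring
    · simp

theorem gaborKernel_add_mul (j k : ℤ) :
    gaborKernel L M N g j (j + k * M) = M * conj (∑ l ∈ range L, matEntry M N (g l) (g l) j k) := by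
  rw [gaborKernel, if_pos ⟨k, by ring⟩, map_sum]
  simp_rw [conj_matEntry]

theorem gaborKernel_eq_ite_iff (hM : 0 < M) (hN : 0 < N) {S : Set ℤ} (hS : IsPeriodicSet N S)
    (hgS : ∀ l, ∀ x ∉ S, g l x = 0) :
    (∀ j ∈ S, ∀ j' ∈ S, gaborKernel L M N g j j' = if j = j' then 1 else 0) ↔
      ((∀ j ∈ S ∩ Set.Ico (0 : ℤ) (N : ℤ),
          ∑ l ∈ range L, matEntry M N (g l) (g l) j 0 = 1 / (M : ℂ)) ∧
       (∀ j ∈ S ∩ Set.Ico (0 : ℤ) (N : ℤ), ∀ k : ℤ, k ≠ 0 →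
          ∑ l ∈ range L, matEntry M N (g l) (g l) j k = 0)) := by
  have hM' : (M : ℂ) ≠ 0 := by exact_mod_cast hM.ne'
  have hshift {j k : ℤ} (hk : k ≠ 0) : j ≠ j + k * M := by
    simpa [eq_comm] using mul_ne_zero hk (by exact_mod_cast hM.ne' : (M : ℤ) ≠ 0)
  have hdiag (j : ℤ) : gaborKernel L M N g j j =
      M * conj (∑ l ∈ range L, matEntry M N (g l) (g l) j 0) := by
    simpa using gaborKernel_add_mul (g := g) j 0
  constructor
  · intro hK
    refine ⟨fun j hj => ?_, fun j hj k hk => ?_⟩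
    · have := hK j hj.1 j hj.1
      rw [hdiag, if_pos rfl] at this
      simpa [-map_sum] using congrArg conj (eq_one_div_of_mul_eq_one_right this)
    · by_cases hjk : j + k * M ∈ S
      · have := hK j hj.1 _ hjk
        rw [gaborKernel_add_mul, if_neg (hshift hk)] at this
        simpa [hM', -map_sum] using this
      · exact sum_eq_zero fun l _ => matEntry_eq_zero hS (hgS l) hjk
  · rintro ⟨ha, hb⟩ j hj j' hj'
    by_cases hdvd : (M : ℤ) ∣ j' - j
    · obtain ⟨k, hk⟩ := hdvd
      obtain rfl : j' = j + k * M := by linarith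
      obtain ⟨r, hr, t, rfl⟩ := hS.exists_mem_Ico hN hj
      simp_rw [gaborKernel_add_mul, matEntry_add_mul]
      by_cases hk0 : k = 0
      · simp [hk0, ha r hr, hM']
      · simp [hb r hr k hk0, hshift hk0]
    · rw [gaborKernel, if_neg hdvd, if_neg]
      rintro rfl
      simp at hdvd

end Gabor

theorem stmt7_general (L M N : ℕ) (hM : 0 < M) (hN : 0 < N)
    (S : Set ℤ) (hS : IsPeriodicSet N S)
    (g : ℕ → ℤ → ℂ) (hg : ∀ l, MemL2S S (g l)) :
    IsFrameOn S (gaborFam L M N g) 1 1 ↔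
      ((∀ j ∈ S ∩ Set.Ico (0 : ℤ) (N : ℤ),
          ∑ l ∈ Finset.range L, matEntry M N (g l) (g l) j 0 = 1 / (M : ℂ)) ∧
       (∀ j ∈ S ∩ Set.Ico (0 : ℤ) (N : ℤ), ∀ k : ℤ, k ≠ 0 →
          ∑ l ∈ Finset.range L, matEntry M N (g l) (g l) j k = 0)) := by
  have hg2 (l : ℕ) : Memℓp (g l) 2 := (hg l).1
  have hframeSum {T : Finset ℤ} {f : ℤ → ℂ} (hfT : ∀ j ∉ T, f j = 0) :=
    hasSum_norm_sq_dotP_gaborFam (L := L) hM hN hg2 hfT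
  rw [isFrameOn_one_one_iff (memℓp_gaborFam hg2)
      (fun T f hfT => Complex.summable_ofReal.1 (hframeSum hfT).summable),
    ← gaborKernel_eq_ite_iff hM hN hS fun l => (hg l).2, ← sum_kernel_eq_sum_norm_sq_iff]
  refine forall₄_congr fun T f _ hfT => ?_
  rw [← (hframeSum hfT).tsum_eq, ← Complex.ofReal_tsum, normSq2,
    tsum_eq_sum (s := T) fun j hj => by simp [hfT j hj], ← Complex.ofReal_sum]
  exact Complex.ofReal_inj.symm

theorem stmt7 (L M N : ℕ) (hL : 0 < L) (hM : 0 < M) (hN : 0 < N)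
    (S : Set ℤ) (hS : IsPeriodicSet N S)
    (g : ℕ → ℤ → ℂ) (hg : ∀ l, MemL2S S (g l)) :
    IsFrameOn S (gaborFam L M N g) 1 1 ↔
      ((∀ j ∈ S ∩ Set.Ico (0 : ℤ) (N : ℤ),
          ∑ l ∈ Finset.range L, matEntry M N (g l) (g l) j 0 = 1 / (M : ℂ)) ∧
       (∀ j ∈ S ∩ Set.Ico (0 : ℤ) (N : ℤ), ∀ k : ℤ, k ≠ 0 →
          ∑ l ∈ Finset.range L, matEntry M N (g l) (g l) j k = 0)) :=
  stmt7_general L M N hM hN S hS g hg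
end
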